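/- arXiv:2205.07432 — 2 statements merged into one kernel-verified Lean document; each statement's English description precedes it below -/
import Mathlib

section
/- Let z_1^±,...,z_N^± be real numbers, Λ(λ) = Π_{n=2}^N (λ - z_n^-) / Π_{n=2}^N (λ - z_n^+), and fix x ∈ ℝ^3. Suppose m : ℂ \ {poles} → ℂ satisfies ∂_{λ̄} m(λ) = s(λ) E(λ) m(λ̄) where E(λ) = e^{(λ̄-λ)x1+(λ̄^2-λ^2)x2+(λ̄^3-λ^3)x3}, and define s^+(λ) = (Λ(λ)/Λ(λ̄)) s(λ). Then w(λ) := Λ(λ) m(λ) satisfies ∂_{λ̄} w(λ) = s^+(λ) E(λ) w(λ̄) away from the poles and zeros of Λ. -/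
/-- The Wirtinger derivative `∂_{λ̄} = (∂_x + i∂_y)/2` (as a junk-valued total operation). -/
noncomputable def dbar (f : ℂ → ℂ) (z : ℂ) : ℂ :=
  (1 / 2 : ℂ) * (fderiv ℝ f z 1 + Complex.I * fderiv ℝ f z Complex.I)

lemma dbar_mul_holo (f g : ℂ → ℂ) (w : ℂ) (hf : DifferentiableAt ℂ f w)
    (hg : DifferentiableAt ℝ g w) :
    dbar (fun v => f v * g v) w = f w * dbar g w := by
  have hfr : DifferentiableAt ℝ f w := hf.restrictScalars ℝ
  have hfd : fderiv ℝ f w = (fderiv ℂ f w).restrictScalars ℝ :=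
    (hf.hasFDerivAt.restrictScalars ℝ).fderiv
  have hmul := fderiv_fun_mul hfr hg
  have hI : fderiv ℂ f w Complex.I = Complex.I * fderiv ℂ f w 1 := by
    have : (Complex.I : ℂ) = Complex.I • (1 : ℂ) := by simp
    rw [this, map_smul]; simp [smul_eq_mul]
  simp only [dbar, hmul, hfd]
  simp only [ContinuousLinearMap.add_apply, ContinuousLinearMap.smul_apply,
    ContinuousLinearMap.coe_restrictScalars', smul_eq_mul, hI]
  ring_nf
  rw [Complex.I_sq]
  ring

/-- Gauge transformation of the `∂̄` equation: with real `z_n^±`,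
`Λ(λ) = Π_{n=2}^N (λ-z_n^-)/Π_{n=2}^N (λ-z_n^+)`, and
`E(λ) = e^{(λ̄-λ)x1+(λ̄²-λ²)x2+(λ̄³-λ³)x3}`, if `∂_{λ̄} m = s E m(λ̄)` at a point `w`
away from the poles and zeros of `Λ`, then `w(λ) = Λ(λ)m(λ)` satisfies
`∂_{λ̄}(Λm) = s⁺ E (Λm)(λ̄)` there, where `s⁺(λ) = (Λ(λ)/Λ(λ̄)) s(λ)`. -/
theorem gauge_transformed_dbar_equation (N : ℕ) (zp zm : Fin N → ℝ) (x1 x2 x3 : ℝ)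
    (s m E Λ : ℂ → ℂ)
    (hE : ∀ l : ℂ, E l = Complex.exp (((starRingEnd ℂ) l - l) * (x1 : ℂ)
        + (((starRingEnd ℂ) l) ^ 2 - l ^ 2) * (x2 : ℂ)
        + (((starRingEnd ℂ) l) ^ 3 - l ^ 3) * (x3 : ℂ)))
    (hΛ : ∀ l : ℂ, Λ l
        = (∏ n ∈ Finset.univ.filter (fun n : Fin N => (n : ℕ) ≠ 0), (l - (zm n : ℂ)))
          / (∏ n ∈ Finset.univ.filter (fun n : Fin N => (n : ℕ) ≠ 0), (l - (zp n : ℂ))))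
    (w : ℂ)
    (hpole : (∏ n ∈ Finset.univ.filter (fun n : Fin N => (n : ℕ) ≠ 0), (w - (zp n : ℂ))) ≠ 0)
    (hzero : (∏ n ∈ Finset.univ.filter (fun n : Fin N => (n : ℕ) ≠ 0), (w - (zm n : ℂ))) ≠ 0)
    (hm : DifferentiableAt ℝ m w)
    (heq : dbar m w = s w * E w * m ((starRingEnd ℂ) w)) :
    dbar (fun v => Λ v * m v) w
      = (Λ w / Λ ((starRingEnd ℂ) w)) * s w * E w
          * (Λ ((starRingEnd ℂ) w) * m ((starRingEnd ℂ) w)) := by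
  set F := Finset.univ.filter (fun n : Fin N => (n : ℕ) ≠ 0) with hF
  have hΛfun : Λ = fun l => (∏ n ∈ F, (l - (zm n : ℂ))) / (∏ n ∈ F, (l - (zp n : ℂ))) :=
    funext hΛ
  -- differentiability of Λ at w
  have hnum : DifferentiableAt ℂ (fun l : ℂ => ∏ n ∈ F, (l - (zm n : ℂ))) w := by
    apply DifferentiableAt.fun_finsetProd
    intro i _
    exact differentiableAt_id.sub_const _
  have hden : DifferentiableAt ℂ (fun l : ℂ => ∏ n ∈ F, (l - (zp n : ℂ))) w := by
    apply DifferentiableAt.fun_finsetProd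
    intro i _
    exact differentiableAt_id.sub_const _
  have hΛdiff : DifferentiableAt ℂ Λ w := by
    rw [hΛfun]; exact hnum.div hden hpole
  -- Λ(conj w) ≠ 0
  have hnumc : (∏ n ∈ F, ((starRingEnd ℂ) w - (zm n : ℂ))) ≠ 0 := by
    have : (∏ n ∈ F, ((starRingEnd ℂ) w - (zm n : ℂ)))
        = (starRingEnd ℂ) (∏ n ∈ F, (w - (zm n : ℂ))) := by
      rw [map_prod]
      exact Finset.prod_congr rfl (fun i _ => by simp)
    rw [this, map_ne_zero]
    exact hzero
  have hdenc : (∏ n ∈ F, ((starRingEnd ℂ) w - (zp n : ℂ))) ≠ 0 := by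
    have : (∏ n ∈ F, ((starRingEnd ℂ) w - (zp n : ℂ)))
        = (starRingEnd ℂ) (∏ n ∈ F, (w - (zp n : ℂ))) := by
      rw [map_prod]
      exact Finset.prod_congr rfl (fun i _ => by simp)
    rw [this, map_ne_zero]
    exact hpole
  have hΛc : Λ ((starRingEnd ℂ) w) ≠ 0 := by
    rw [hΛ]
    exact div_ne_zero hnumc hdenc
  rw [dbar_mul_holo Λ m w hΛdiff hm, heq]
  field_simp
end

section
/- Let D ⊂ ℂ be a bounded disk and p > 2, ν = (p-2)/p. There is a constant C (depending on D and p) such that for every φ ∈ L^p(D), the Cauchy transform F(λ) = -(1/(2πi)) ∬_D φ(ζ)/(ζ-λ) dζ̄∧dζ satisfies sup_λ |F(λ)| ≤ C ‖φ‖_{L^p(D)} and |F(λ1) - F(λ2)| ≤ C ‖φ‖_{L^p(D)} |λ1 - λ2|^ν for all λ1, λ2 ∈ ℂ. -/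
open MeasureTheory

open Metric
open scoped ENNReal NNReal

lemma ofReal_norm_eq_coe_nnnorm {E : Type*} [SeminormedAddCommGroup E] (a : E) :
    ENNReal.ofReal ‖a‖ = (‖a‖₊ : ℝ≥0∞) := ofReal_norm a

lemma pow_rpow' {x : ℝ} (hx : 0 ≤ x) (n : ℕ) (s : ℝ) : ((x ^ n : ℝ)) ^ s = (x ^ s) ^ n := by
  rw [← Real.rpow_natCast x n, ← Real.rpow_mul hx, mul_comm, Real.rpow_mul hx,
    Real.rpow_natCast]

lemma annulus_cover_ball {z0 : ℂ} {δ : ℝ} (hδ : 0 < δ) :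
    ball z0 δ ⊆ {z0} ∪ ⋃ n : ℕ,
      (ball z0 (δ * (1/2:ℝ)^n) \ ball z0 (δ * (1/2:ℝ)^(n+1))) := by
  intro ζ hζ
  rcases eq_or_ne ζ z0 with h | h
  · exact Or.inl h
  · right
    have hr0 : 0 < dist ζ z0 := dist_pos.2 h
    have hrδ : dist ζ z0 < δ := mem_ball.1 hζ
    have hex : ∃ n : ℕ, δ * (1/2:ℝ)^(n+1) ≤ dist ζ z0 := by
      obtain ⟨n, hn⟩ := exists_pow_lt_of_lt_one (div_pos hr0 hδ) (by norm_num : (1/2:ℝ) < 1)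
      refine ⟨n, ?_⟩
      have h1 : δ * (1/2:ℝ)^n < dist ζ z0 := by
        rw [mul_comm]
        exact (lt_div_iff₀ hδ).1 hn
      have h2 : δ * (1/2:ℝ)^(n+1) ≤ δ * (1/2:ℝ)^n := by
        have : ((1:ℝ)/2)^(n+1) ≤ (1/2:ℝ)^n :=
          pow_le_pow_of_le_one (by norm_num) (by norm_num) (Nat.le_succ n)
        nlinarith
      linarith
    set n0 := Nat.find hex with hn0
    refine Set.mem_iUnion.2 ⟨n0, ⟨?_, ?_⟩⟩
    · rw [mem_ball]
      rcases Nat.eq_zero_or_pos n0 with h0 | h0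
      · simpa [h0] using hrδ
      · have := Nat.find_min hex (show n0 - 1 < n0 from Nat.sub_lt h0 one_pos)
        push_neg at this
        rw [show n0 - 1 + 1 = n0 from Nat.succ_pred_eq_of_pos h0] at this
        exact this
    · intro hmem
      exact absurd (mem_ball.1 hmem) (not_lt.2 (Nat.find_spec hex))

lemma lint_ball_rpow {s : ℝ} (hs0 : 0 < s) (hs2 : s < 2) :
    ∃ C : ℝ, 0 < C ∧ ∀ (z0 : ℂ) (δ : ℝ), 0 < δ →
      ∫⁻ ζ in ball z0 δ, ENNReal.ofReal ((‖ζ - z0‖ ^ s)⁻¹) ≤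
        ENNReal.ofReal (C * δ ^ (2 - s)) := by
  set ρ : ℝ := (1/2 : ℝ) ^ (2 - s) with hρdef
  have hρ0 : 0 < ρ := Real.rpow_pos_of_pos (by norm_num) _
  have hρ1 : ρ < 1 := Real.rpow_lt_one (by norm_num) (by norm_num) (by linarith)
  have h2s : (0:ℝ) < (2:ℝ) ^ s := Real.rpow_pos_of_pos (by norm_num) _
  have h1ρ : 0 < 1 - ρ := by linarith
  refine ⟨Real.pi * (2:ℝ)^s * (1 - ρ)⁻¹, by positivity, ?_⟩
  intro z0 δ hδ
  set f : ℂ → ℝ≥0∞ := fun ζ => ENNReal.ofReal ((‖ζ - z0‖ ^ s)⁻¹) with hf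
  set A : ℕ → Set ℂ := fun n =>
    ball z0 (δ * (1/2:ℝ)^n) \ ball z0 (δ * (1/2:ℝ)^(n+1)) with hA
  have term : ∀ n : ℕ, ∫⁻ ζ in A n, f ζ ≤
      ENNReal.ofReal ((Real.pi * (2:ℝ)^s * δ ^ (2 - s)) * ρ ^ n) := by
    intro n
    have hrn1 : 0 < δ * (1/2:ℝ)^(n+1) := by positivity
    have hrn : 0 < δ * (1/2:ℝ)^n := by positivity
    have hb : ∀ ζ ∈ A n, f ζ ≤ ENNReal.ofReal (((δ * (1/2:ℝ)^(n+1)) ^ s)⁻¹) := by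
      intro ζ hζ
      apply ENNReal.ofReal_le_ofReal
      have h1 : δ * (1/2:ℝ)^(n+1) ≤ ‖ζ - z0‖ := by
        simpa [mem_ball, dist_eq_norm, not_lt] using hζ.2
      exact inv_anti₀ (Real.rpow_pos_of_pos hrn1 s)
        (Real.rpow_le_rpow hrn1.le h1 hs0.le)
    have hpi : (NNReal.pi : ℝ≥0∞) = ENNReal.ofReal Real.pi := by
      rw [← NNReal.coe_real_pi, ENNReal.ofReal_coe_nnreal]
    calc ∫⁻ ζ in A n, f ζ
        ≤ ∫⁻ _ in A n, ENNReal.ofReal (((δ * (1/2:ℝ)^(n+1)) ^ s)⁻¹) :=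
          setLIntegral_mono measurable_const hb
      _ = ENNReal.ofReal (((δ * (1/2:ℝ)^(n+1)) ^ s)⁻¹) * volume (A n) :=
          setLIntegral_const _ _
      _ ≤ ENNReal.ofReal (((δ * (1/2:ℝ)^(n+1)) ^ s)⁻¹) *
            volume (ball z0 (δ * (1/2:ℝ)^n)) := by
          gcongr
          exact Set.diff_subset
      _ = ENNReal.ofReal (((δ * (1/2:ℝ)^(n+1)) ^ s)⁻¹) *
            (ENNReal.ofReal (δ * (1/2:ℝ)^n) ^ 2 * NNReal.pi) := by
          rw [Complex.volume_ball]
      _ = ENNReal.ofReal ((((δ * (1/2:ℝ)^(n+1)) ^ s)⁻¹) *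
            ((δ * (1/2:ℝ)^n) ^ 2 * Real.pi)) := by
          rw [hpi, ← ENNReal.ofReal_pow hrn.le, ← ENNReal.ofReal_mul (by positivity),
            ← ENNReal.ofReal_mul (by positivity)]
      _ ≤ ENNReal.ofReal ((Real.pi * (2:ℝ)^s * δ ^ (2 - s)) * ρ ^ n) := by
          apply ENNReal.ofReal_le_ofReal
          apply le_of_eq
          set a : ℝ := δ ^ s with ha'
          set x : ℝ := ((1:ℝ)/2) ^ s with hx'
          have ha : 0 < a := Real.rpow_pos_of_pos hδ s
          have hx : 0 < x := Real.rpow_pos_of_pos (by norm_num) s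
          have e1 : (δ * (1/2:ℝ)^(n+1)) ^ s = a * x ^ (n+1) := by
            rw [Real.mul_rpow hδ.le (by positivity), pow_rpow' (by norm_num) (n+1) s]
          have e2 : ((δ * (1/2:ℝ)^n)) ^ 2 = δ^2 * ((1/2:ℝ)^2)^n := by
            rw [mul_pow, ← pow_mul, ← pow_mul, Nat.mul_comm]
          have e3 : δ^2 = δ ^ ((2:ℝ) - s) * a := by
            rw [ha', ← Real.rpow_add hδ, sub_add_cancel, Real.rpow_two]
          have e4 : ((1/2:ℝ)^2 : ℝ) = ρ * x := by
            rw [hρdef, hx', ← Real.rpow_add (by norm_num : (0:ℝ) < 1/2),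
              sub_add_cancel, Real.rpow_two]
          have e5 : (2:ℝ)^s = x⁻¹ := by
            rw [hx', ← Real.inv_rpow (by norm_num : (0:ℝ) ≤ 1/2)]
            norm_num
          rw [e1, e2, e3, e4, mul_pow, e5]
          field_simp
          ring
  have h1 : (∫⁻ ζ in ({z0} : Set ℂ), f ζ) = 0 :=
    setLIntegral_measure_zero _ _ (measure_singleton _)
  calc ∫⁻ ζ in ball z0 δ, f ζ
      ≤ ∫⁻ ζ in ({z0} ∪ ⋃ n, A n : Set ℂ), f ζ :=
        lintegral_mono_set (annulus_cover_ball hδ)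
    _ ≤ (∫⁻ ζ in ({z0} : Set ℂ), f ζ) + ∫⁻ ζ in (⋃ n, A n), f ζ :=
        lintegral_union_le _ _ _
    _ ≤ 0 + ∑' n, ∫⁻ ζ in A n, f ζ := add_le_add h1.le (lintegral_iUnion_le _ _)
    _ ≤ 0 + ∑' n, ENNReal.ofReal ((Real.pi * (2:ℝ)^s * δ ^ (2 - s)) * ρ ^ n) := by
        gcongr with n
        exact term n
    _ ≤ ENNReal.ofReal (Real.pi * (2:ℝ)^s * (1 - ρ)⁻¹ * δ ^ (2 - s)) := by
        rw [zero_add]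
        have : ∀ n : ℕ, ENNReal.ofReal ((Real.pi * (2:ℝ)^s * δ ^ (2 - s)) * ρ ^ n) =
            ENNReal.ofReal (Real.pi * (2:ℝ)^s * δ ^ (2 - s)) * (ENNReal.ofReal ρ) ^ n := by
          intro n
          rw [← ENNReal.ofReal_pow hρ0.le, ← ENNReal.ofReal_mul (by positivity)]
        simp_rw [this]
        rw [ENNReal.tsum_mul_left, ENNReal.tsum_geometric]
        have hρe : (1 - ENNReal.ofReal ρ)⁻¹ = ENNReal.ofReal ((1 - ρ)⁻¹) := by
          rw [← ENNReal.ofReal_one, ← ENNReal.ofReal_sub _ hρ0.le,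
            ENNReal.ofReal_inv_of_pos (by linarith)]
        rw [hρe, ← ENNReal.ofReal_mul (by positivity)]
        apply ENNReal.ofReal_le_ofReal
        apply le_of_eq; ring

lemma annulus_cover_compl {z0 : ℂ} {δ : ℝ} (hδ : 0 < δ) :
    (ball z0 δ)ᶜ ⊆ ⋃ n : ℕ,
      (ball z0 (δ * (2:ℝ)^(n+1)) \ ball z0 (δ * (2:ℝ)^n)) := by
  intro ζ hζ
  have hr : δ ≤ dist ζ z0 := by simpa [mem_ball, not_lt] using hζ
  have hex : ∃ n : ℕ, dist ζ z0 < δ * (2:ℝ)^(n+1) := by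
    obtain ⟨n, hn⟩ := pow_unbounded_of_one_lt (dist ζ z0 / δ) (by norm_num : (1:ℝ) < 2)
    refine ⟨n, ?_⟩
    have h1 : dist ζ z0 < δ * (2:ℝ)^n := by
      rw [div_lt_iff₀ hδ] at hn
      linarith [hn]
    have h2 : δ * (2:ℝ)^n ≤ δ * (2:ℝ)^(n+1) := by
      have : (2:ℝ)^n ≤ (2:ℝ)^(n+1) := pow_le_pow_right₀ (by norm_num) (Nat.le_succ n)
      nlinarith
    linarith
  set n0 := Nat.find hex with hn0
  refine Set.mem_iUnion.2 ⟨n0, ⟨mem_ball.2 (Nat.find_spec hex), ?_⟩⟩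
  intro hmem
  rcases Nat.eq_zero_or_pos n0 with h0 | h0
  · rw [h0] at hmem
    simp only [pow_zero, mul_one, mem_ball] at hmem
    exact absurd hmem (not_lt.2 hr)
  · have := Nat.find_min hex (show n0 - 1 < n0 from Nat.sub_lt h0 one_pos)
    rw [show n0 - 1 + 1 = n0 from Nat.succ_pred_eq_of_pos h0] at this
    exact this (mem_ball.1 hmem)

lemma lint_tail_rpow {t : ℝ} (ht : 2 < t) :
    ∃ C : ℝ, 0 < C ∧ ∀ (z0 : ℂ) (δ : ℝ), 0 < δ →
      ∫⁻ ζ in (ball z0 δ)ᶜ, ENNReal.ofReal ((‖ζ - z0‖ ^ t)⁻¹) ≤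
        ENNReal.ofReal (C * δ ^ (2 - t)) := by
  have ht0 : 0 < t := by linarith
  set σ : ℝ := (2 : ℝ) ^ (2 - t) with hσdef
  have hσ0 : 0 < σ := Real.rpow_pos_of_pos (by norm_num) _
  have hσ1 : σ < 1 := Real.rpow_lt_one_of_one_lt_of_neg (by norm_num) (by linarith)
  have h1σ : 0 < 1 - σ := by linarith
  refine ⟨Real.pi * 4 * (1 - σ)⁻¹, by positivity, ?_⟩
  intro z0 δ hδ
  set f : ℂ → ℝ≥0∞ := fun ζ => ENNReal.ofReal ((‖ζ - z0‖ ^ t)⁻¹) with hf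
  set A : ℕ → Set ℂ := fun n =>
    ball z0 (δ * (2:ℝ)^(n+1)) \ ball z0 (δ * (2:ℝ)^n) with hA
  have term : ∀ n : ℕ, ∫⁻ ζ in A n, f ζ ≤
      ENNReal.ofReal ((Real.pi * 4 * δ ^ (2 - t)) * σ ^ n) := by
    intro n
    have hrn : 0 < δ * (2:ℝ)^n := by positivity
    have hrn1 : 0 < δ * (2:ℝ)^(n+1) := by positivity
    have hb : ∀ ζ ∈ A n, f ζ ≤ ENNReal.ofReal (((δ * (2:ℝ)^n) ^ t)⁻¹) := by
      intro ζ hζ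
      apply ENNReal.ofReal_le_ofReal
      have h1 : δ * (2:ℝ)^n ≤ ‖ζ - z0‖ := by
        simpa [mem_ball, dist_eq_norm, not_lt] using hζ.2
      exact inv_anti₀ (Real.rpow_pos_of_pos hrn t)
        (Real.rpow_le_rpow hrn.le h1 ht0.le)
    have hpi : (NNReal.pi : ℝ≥0∞) = ENNReal.ofReal Real.pi := by
      rw [← NNReal.coe_real_pi, ENNReal.ofReal_coe_nnreal]
    calc ∫⁻ ζ in A n, f ζ
        ≤ ∫⁻ _ in A n, ENNReal.ofReal (((δ * (2:ℝ)^n) ^ t)⁻¹) :=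
          setLIntegral_mono measurable_const hb
      _ = ENNReal.ofReal (((δ * (2:ℝ)^n) ^ t)⁻¹) * volume (A n) :=
          setLIntegral_const _ _
      _ ≤ ENNReal.ofReal (((δ * (2:ℝ)^n) ^ t)⁻¹) *
            volume (ball z0 (δ * (2:ℝ)^(n+1))) := by
          gcongr
          exact Set.diff_subset
      _ = ENNReal.ofReal (((δ * (2:ℝ)^n) ^ t)⁻¹) *
            (ENNReal.ofReal (δ * (2:ℝ)^(n+1)) ^ 2 * NNReal.pi) := by
          rw [Complex.volume_ball]
      _ = ENNReal.ofReal ((((δ * (2:ℝ)^n) ^ t)⁻¹) *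
            ((δ * (2:ℝ)^(n+1)) ^ 2 * Real.pi)) := by
          rw [hpi, ← ENNReal.ofReal_pow hrn1.le, ← ENNReal.ofReal_mul (by positivity),
            ← ENNReal.ofReal_mul (by positivity)]
      _ ≤ ENNReal.ofReal ((Real.pi * 4 * δ ^ (2 - t)) * σ ^ n) := by
          apply ENNReal.ofReal_le_ofReal
          apply le_of_eq
          set a : ℝ := δ ^ t with ha'
          set x : ℝ := (2:ℝ) ^ t with hx'
          have ha : 0 < a := Real.rpow_pos_of_pos hδ t
          have hx : 0 < x := Real.rpow_pos_of_pos (by norm_num) t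
          have e1 : (δ * (2:ℝ)^n) ^ t = a * x ^ n := by
            rw [Real.mul_rpow hδ.le (by positivity), pow_rpow' (by norm_num) n t]
          have e2 : ((δ * (2:ℝ)^(n+1))) ^ 2 = δ^2 * ((2:ℝ)^2)^(n+1) := by
            rw [mul_pow, ← pow_mul, ← pow_mul, Nat.mul_comm]
          have e3 : δ^2 = δ ^ ((2:ℝ) - t) * a := by
            rw [ha', ← Real.rpow_add hδ, sub_add_cancel, Real.rpow_two]
          have e4 : ((2:ℝ)^2 : ℝ) = σ * x := by
            rw [hσdef, hx', ← Real.rpow_add (by norm_num : (0:ℝ) < 2),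
              sub_add_cancel, Real.rpow_two]
          rw [e1, e2, e3, e4, mul_pow]
          have e5 : σ * x = 4 := by rw [← e4]; norm_num
          field_simp
          linear_combination σ ^ n * x ^ n * e5
  calc ∫⁻ ζ in (ball z0 δ)ᶜ, f ζ
      ≤ ∫⁻ ζ in (⋃ n, A n), f ζ := lintegral_mono_set (annulus_cover_compl hδ)
    _ ≤ ∑' n, ∫⁻ ζ in A n, f ζ := lintegral_iUnion_le _ _
    _ ≤ ∑' n, ENNReal.ofReal ((Real.pi * 4 * δ ^ (2 - t)) * σ ^ n) := by
        gcongr with n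
        exact term n
    _ ≤ ENNReal.ofReal (Real.pi * 4 * (1 - σ)⁻¹ * δ ^ (2 - t)) := by
        have : ∀ n : ℕ, ENNReal.ofReal ((Real.pi * 4 * δ ^ (2 - t)) * σ ^ n) =
            ENNReal.ofReal (Real.pi * 4 * δ ^ (2 - t)) * (ENNReal.ofReal σ) ^ n := by
          intro n
          rw [← ENNReal.ofReal_pow hσ0.le, ← ENNReal.ofReal_mul (by positivity)]
        simp_rw [this]
        rw [ENNReal.tsum_mul_left, ENNReal.tsum_geometric]
        have hσe : (1 - ENNReal.ofReal σ)⁻¹ = ENNReal.ofReal ((1 - σ)⁻¹) := by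
          rw [← ENNReal.ofReal_one, ← ENNReal.ofReal_sub _ hσ0.le,
            ENNReal.ofReal_inv_of_pos (by linarith)]
        rw [hσe, ← ENNReal.ofReal_mul (by positivity)]
        apply ENNReal.ofReal_le_ofReal
        apply le_of_eq; ring

lemma holder_lint {p q : ℝ} (hpq : Real.HolderConjugate p q) {μ : Measure ℂ}
    {φ : ℂ → ℂ} (hφ : AEStronglyMeasurable φ μ) {g : ℂ → ℝ} (hg : Measurable g)
    (hg0 : ∀ ζ, 0 ≤ g ζ) :
    ∫⁻ ζ, (‖φ ζ‖₊ : ℝ≥0∞) * ENNReal.ofReal (g ζ) ∂μ ≤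
      eLpNorm φ (ENNReal.ofReal p) μ * (∫⁻ ζ, ENNReal.ofReal (g ζ ^ q) ∂μ) ^ (1/q) := by
  have h := ENNReal.lintegral_mul_le_Lp_mul_Lq μ hpq hφ.enorm
    (hg.ennreal_ofReal.aemeasurable)
  have hsn : eLpNorm φ (ENNReal.ofReal p) μ =
      (∫⁻ ζ, (‖φ ζ‖₊ : ℝ≥0∞) ^ p ∂μ) ^ (1/p) := by
    rw [eLpNorm_eq_lintegral_rpow_enorm_toReal (ENNReal.ofReal_pos.2 hpq.pos).ne'
      ENNReal.ofReal_ne_top, ENNReal.toReal_ofReal hpq.nonneg]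
    rfl
  have hgq : ∀ ζ, (ENNReal.ofReal (g ζ)) ^ q = ENNReal.ofReal (g ζ ^ q) := fun ζ =>
    ENNReal.ofReal_rpow_of_nonneg (hg0 ζ) hpq.symm.nonneg
  rw [hsn]
  simp_rw [← hgq]
  exact h

lemma K_unif {q : ℝ} (hq1 : 1 < q) (hq2 : q < 2) (c : ℂ) {R : ℝ} (hR : 0 < R) :
    ∃ M : ℝ, 0 < M ∧ ∀ lam : ℂ,
      ∫⁻ ζ in ball c R, ENNReal.ofReal ((‖ζ - lam‖ ^ q)⁻¹) ≤ ENNReal.ofReal M := by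
  obtain ⟨C, hC, hCb⟩ := lint_ball_rpow (by linarith : (0:ℝ) < q) hq2
  refine ⟨max (C * (3*R) ^ (2-q)) ((R ^ q)⁻¹ * (R^2 * Real.pi)), ?_, ?_⟩
  · apply lt_max_of_lt_left
    have : (0:ℝ) < (3*R) ^ (2-q) := Real.rpow_pos_of_pos (by linarith) _
    positivity
  intro lam
  by_cases hfar : ‖lam - c‖ < 2*R
  · have hsub : ball c R ⊆ ball lam (3*R) := by
      intro ζ hζ
      rw [mem_ball, dist_eq_norm] at hζ ⊢
      have h1 : ‖ζ - lam‖ ≤ ‖ζ - c‖ + ‖c - lam‖ := by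
        simpa using norm_add_le (ζ - c) (c - lam)
      rw [norm_sub_rev c lam] at h1
      linarith
    calc ∫⁻ ζ in ball c R, ENNReal.ofReal ((‖ζ - lam‖ ^ q)⁻¹)
        ≤ ∫⁻ ζ in ball lam (3*R), ENNReal.ofReal ((‖ζ - lam‖ ^ q)⁻¹) :=
          lintegral_mono_set hsub
      _ ≤ ENNReal.ofReal (C * (3*R) ^ (2-q)) := hCb lam (3*R) (by linarith)
      _ ≤ _ := ENNReal.ofReal_le_ofReal (le_max_left _ _)
  · push_neg at hfar
    have hb : ∀ ζ ∈ ball c R, ENNReal.ofReal ((‖ζ - lam‖ ^ q)⁻¹) ≤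
        ENNReal.ofReal ((R ^ q)⁻¹) := by
      intro ζ hζ
      rw [mem_ball, dist_eq_norm] at hζ
      have h2 : ‖lam - c‖ ≤ ‖lam - ζ‖ + ‖ζ - c‖ := by
        simpa using norm_add_le (lam - ζ) (ζ - c)
      have h3 : R ≤ ‖ζ - lam‖ := by
        rw [norm_sub_rev]
        linarith
      exact ENNReal.ofReal_le_ofReal (inv_anti₀ (Real.rpow_pos_of_pos hR q)
        (Real.rpow_le_rpow hR.le h3 (by linarith)))
    calc ∫⁻ ζ in ball c R, ENNReal.ofReal ((‖ζ - lam‖ ^ q)⁻¹)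
        ≤ ∫⁻ _ in ball c R, ENNReal.ofReal ((R ^ q)⁻¹) :=
          setLIntegral_mono measurable_const hb
      _ = ENNReal.ofReal ((R ^ q)⁻¹) * volume (ball c R) := setLIntegral_const _ _
      _ = ENNReal.ofReal ((R ^ q)⁻¹ * (R^2 * Real.pi)) := by
          have hpi : (NNReal.pi : ℝ≥0∞) = ENNReal.ofReal Real.pi := by
            rw [← NNReal.coe_real_pi, ENNReal.ofReal_coe_nnreal]
          rw [Complex.volume_ball, hpi, ← ENNReal.ofReal_pow hR.le,
            ← ENNReal.ofReal_mul (by positivity), ← ENNReal.ofReal_mul (by positivity)]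
      _ ≤ _ := ENNReal.ofReal_le_ofReal (le_max_right _ _)

lemma kernel_bound {q : ℝ} (hq1 : 1 < q) (hq2 : q < 2) :
    ∃ C : ℝ, 0 < C ∧ ∀ (l1 l2 : ℂ), l1 ≠ l2 →
      ∫⁻ ζ, ENNReal.ofReal (((‖ζ - l1‖ * ‖ζ - l2‖) ^ q)⁻¹) ≤
        ENNReal.ofReal (C * ‖l1 - l2‖ ^ (2 - 2*q)) := by
  obtain ⟨Cb, hCb0, hCb⟩ := lint_ball_rpow (by linarith : (0:ℝ) < q) hq2
  obtain ⟨Ct, hCt0, hCt⟩ := lint_tail_rpow (by linarith : (2:ℝ) < 2*q)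
  have h2p : (0:ℝ) < (2:ℝ) ^ (2*q-2) := Real.rpow_pos_of_pos (by norm_num) _
  have h3p : (0:ℝ) < (3:ℝ) ^ q := Real.rpow_pos_of_pos (by norm_num) _
  refine ⟨Cb * (2:ℝ)^(2*q-2) + Cb * (2:ℝ)^(2*q-2) + (3:ℝ)^q * (Ct * (2:ℝ)^(2*q-2)),
    by positivity, ?_⟩
  intro l1 l2 hne
  set δ : ℝ := ‖l1 - l2‖ with hδdef
  have hδ : 0 < δ := by
    rw [hδdef, norm_pos_iff, sub_ne_zero]; exact hne
  have hδ2 : 0 < δ/2 := by linarith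
  set f : ℂ → ℝ≥0∞ := fun ζ => ENNReal.ofReal (((‖ζ - l1‖ * ‖ζ - l2‖) ^ q)⁻¹) with hfdef
  set S1 := ball l1 (δ/2) with hS1
  set S2 := ball l2 (δ/2) with hS2
  -- halving identity : (δ/2)^(2-2q) = 2^(2q-2) * δ^(2-2q)
  have hhalf : (δ/2) ^ (2-2*q) = (2:ℝ)^(2*q-2) * δ ^ (2-2*q) := by
    rw [Real.div_rpow hδ.le (by norm_num), div_eq_mul_inv, mul_comm,
      ← Real.rpow_neg (by norm_num : (0:ℝ) ≤ 2), neg_sub]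
  -- pointwise splitting of the kernel
  have hsplit : ∀ ζ : ℂ, f ζ =
      ENNReal.ofReal ((‖ζ - l1‖ ^ q)⁻¹ * (‖ζ - l2‖ ^ q)⁻¹) := by
    intro ζ
    show ENNReal.ofReal (((‖ζ - l1‖ * ‖ζ - l2‖) ^ q)⁻¹) = _
    congr 1
    rw [Real.mul_rpow (norm_nonneg _) (norm_nonneg _), mul_inv]
  -- piece 1
  have hp1 : ∫⁻ ζ in S1, f ζ ≤
      ENNReal.ofReal (Cb * (2:ℝ)^(2*q-2) * δ ^ (2-2*q)) := by
    have hb : ∀ ζ ∈ S1, f ζ ≤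
        ENNReal.ofReal (((δ/2) ^ q)⁻¹) * ENNReal.ofReal ((‖ζ - l1‖ ^ q)⁻¹) := by
      intro ζ hζ
      rw [hsplit ζ, ← ENNReal.ofReal_mul (by positivity)]
      apply ENNReal.ofReal_le_ofReal
      rw [mul_comm (((δ/2) ^ q)⁻¹)]
      have h1 : δ/2 ≤ ‖ζ - l2‖ := by
        rw [hS1, mem_ball, dist_eq_norm] at hζ
        have h2 : δ ≤ ‖ζ - l1‖ + ‖ζ - l2‖ := by
          calc δ = ‖l1 - l2‖ := hδdef
            _ ≤ ‖l1 - ζ‖ + ‖ζ - l2‖ := by simpa using norm_add_le (l1 - ζ) (ζ - l2)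
            _ = ‖ζ - l1‖ + ‖ζ - l2‖ := by rw [norm_sub_rev]
        linarith
      have h3 : (‖ζ - l2‖ ^ q)⁻¹ ≤ ((δ/2) ^ q)⁻¹ :=
        inv_anti₀ (Real.rpow_pos_of_pos hδ2 q)
          (Real.rpow_le_rpow hδ2.le h1 (by linarith))
      have h4 : (0:ℝ) ≤ (‖ζ - l1‖ ^ q)⁻¹ := by positivity
      exact mul_le_mul_of_nonneg_left h3 h4
    calc ∫⁻ ζ in S1, f ζ
        ≤ ∫⁻ ζ in S1, ENNReal.ofReal (((δ/2) ^ q)⁻¹) *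
            ENNReal.ofReal ((‖ζ - l1‖ ^ q)⁻¹) :=
          setLIntegral_mono (by fun_prop) hb
      _ = ENNReal.ofReal (((δ/2) ^ q)⁻¹) *
            ∫⁻ ζ in S1, ENNReal.ofReal ((‖ζ - l1‖ ^ q)⁻¹) :=
          lintegral_const_mul' _ _ ENNReal.ofReal_ne_top
      _ ≤ ENNReal.ofReal (((δ/2) ^ q)⁻¹) * ENNReal.ofReal (Cb * (δ/2) ^ (2-q)) := by
          gcongr
          exact hCb l1 (δ/2) hδ2
      _ ≤ ENNReal.ofReal (Cb * (2:ℝ)^(2*q-2) * δ ^ (2-2*q)) := by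
          rw [← ENNReal.ofReal_mul (by positivity)]
          apply ENNReal.ofReal_le_ofReal
          apply le_of_eq
          have e1 : (δ/2) ^ (2-q) = (δ/2) ^ (2-2*q) * (δ/2) ^ q := by
            rw [← Real.rpow_add hδ2]; ring_nf
          rw [e1, hhalf]
          field_simp [(Real.rpow_pos_of_pos hδ2 q).ne']
  -- piece 2 (symmetric)
  have hp2 : ∫⁻ ζ in S2, f ζ ≤
      ENNReal.ofReal (Cb * (2:ℝ)^(2*q-2) * δ ^ (2-2*q)) := by
    have hb : ∀ ζ ∈ S2, f ζ ≤
        ENNReal.ofReal (((δ/2) ^ q)⁻¹) * ENNReal.ofReal ((‖ζ - l2‖ ^ q)⁻¹) := by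
      intro ζ hζ
      rw [hsplit ζ, ← ENNReal.ofReal_mul (by positivity)]
      apply ENNReal.ofReal_le_ofReal
      have h1 : δ/2 ≤ ‖ζ - l1‖ := by
        rw [hS2, mem_ball, dist_eq_norm] at hζ
        have h2 : δ ≤ ‖ζ - l1‖ + ‖ζ - l2‖ := by
          calc δ = ‖l1 - l2‖ := hδdef
            _ ≤ ‖l1 - ζ‖ + ‖ζ - l2‖ := by simpa using norm_add_le (l1 - ζ) (ζ - l2)
            _ = ‖ζ - l1‖ + ‖ζ - l2‖ := by rw [norm_sub_rev]
        linarith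
      have h3 : (‖ζ - l1‖ ^ q)⁻¹ ≤ ((δ/2) ^ q)⁻¹ :=
        inv_anti₀ (Real.rpow_pos_of_pos hδ2 q)
          (Real.rpow_le_rpow hδ2.le h1 (by linarith))
      have h4 : (0:ℝ) ≤ (‖ζ - l2‖ ^ q)⁻¹ := by positivity
      exact mul_le_mul_of_nonneg_right h3 h4
    calc ∫⁻ ζ in S2, f ζ
        ≤ ∫⁻ ζ in S2, ENNReal.ofReal (((δ/2) ^ q)⁻¹) *
            ENNReal.ofReal ((‖ζ - l2‖ ^ q)⁻¹) :=
          setLIntegral_mono (by fun_prop) hb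
      _ = ENNReal.ofReal (((δ/2) ^ q)⁻¹) *
            ∫⁻ ζ in S2, ENNReal.ofReal ((‖ζ - l2‖ ^ q)⁻¹) :=
          lintegral_const_mul' _ _ ENNReal.ofReal_ne_top
      _ ≤ ENNReal.ofReal (((δ/2) ^ q)⁻¹) * ENNReal.ofReal (Cb * (δ/2) ^ (2-q)) := by
          gcongr
          exact hCb l2 (δ/2) hδ2
      _ ≤ ENNReal.ofReal (Cb * (2:ℝ)^(2*q-2) * δ ^ (2-2*q)) := by
          rw [← ENNReal.ofReal_mul (by positivity)]
          apply ENNReal.ofReal_le_ofReal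
          apply le_of_eq
          have e1 : (δ/2) ^ (2-q) = (δ/2) ^ (2-2*q) * (δ/2) ^ q := by
            rw [← Real.rpow_add hδ2]; ring_nf
          rw [e1, hhalf]
          field_simp [(Real.rpow_pos_of_pos hδ2 q).ne']
  -- piece 3
  have hp3 : ∫⁻ ζ in (S1 ∪ S2)ᶜ, f ζ ≤
      ENNReal.ofReal ((3:ℝ)^q * (Ct * (2:ℝ)^(2*q-2)) * δ ^ (2-2*q)) := by
    have hb : ∀ ζ ∈ (S1 ∪ S2)ᶜ, f ζ ≤
        ENNReal.ofReal ((3:ℝ)^q) * ENNReal.ofReal ((‖ζ - l1‖ ^ (2*q))⁻¹) := by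
      intro ζ hζ
      rw [Set.mem_compl_iff, Set.mem_union, not_or, hS1, hS2, mem_ball, mem_ball,
        dist_eq_norm, dist_eq_norm, not_lt, not_lt] at hζ
      obtain ⟨ha1, ha2⟩ := hζ
      set a : ℝ := ‖ζ - l1‖
      set b : ℝ := ‖ζ - l2‖
      have ha : 0 < a := lt_of_lt_of_le hδ2 ha1
      have h3b : a/3 ≤ b := by
        rcases le_or_gt a ((3/2)*δ) with hc | hc
        · linarith
        · have htr : a ≤ b + δ := by
            calc a = ‖ζ - l1‖ := rfl
              _ ≤ ‖ζ - l2‖ + ‖l2 - l1‖ := by simpa using norm_add_le (ζ - l2) (l2 - l1)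
              _ = b + δ := by rw [norm_sub_rev l2 l1]
          linarith
      have hab : a^2/3 ≤ a * b := by
        have := mul_le_mul_of_nonneg_left h3b ha.le
        nlinarith
      have h5 : ((a*b) ^ q)⁻¹ ≤ ((a^2/3) ^ q)⁻¹ :=
        inv_anti₀ (Real.rpow_pos_of_pos (by positivity) q)
          (Real.rpow_le_rpow (by positivity) hab (by linarith))
      have h6 : ((a^2/3) ^ q)⁻¹ = (3:ℝ)^q * (a ^ (2*q))⁻¹ := by
        rw [Real.div_rpow (by positivity) (by norm_num), pow_rpow' ha.le 2 q]
        have : (a ^ q) ^ 2 = a ^ (2*q) := by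
          rw [← Real.rpow_natCast (a^q) 2, ← Real.rpow_mul ha.le]
          norm_num [mul_comm]
        rw [this]
        field_simp
      rw [hfdef, ← ENNReal.ofReal_mul (by positivity)]
      apply ENNReal.ofReal_le_ofReal
      calc ((a*b) ^ q)⁻¹ ≤ ((a^2/3) ^ q)⁻¹ := h5
        _ = (3:ℝ)^q * (a ^ (2*q))⁻¹ := h6
    calc ∫⁻ ζ in (S1 ∪ S2)ᶜ, f ζ
        ≤ ∫⁻ ζ in (S1 ∪ S2)ᶜ, ENNReal.ofReal ((3:ℝ)^q) *
            ENNReal.ofReal ((‖ζ - l1‖ ^ (2*q))⁻¹) :=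
          setLIntegral_mono (by fun_prop) hb
      _ ≤ ∫⁻ ζ in (ball l1 (δ/2))ᶜ, ENNReal.ofReal ((3:ℝ)^q) *
            ENNReal.ofReal ((‖ζ - l1‖ ^ (2*q))⁻¹) := by
          apply lintegral_mono_set
          intro ζ hζ
          rw [Set.mem_compl_iff] at hζ ⊢
          exact fun hmem => hζ (Or.inl hmem)
      _ = ENNReal.ofReal ((3:ℝ)^q) *
            ∫⁻ ζ in (ball l1 (δ/2))ᶜ, ENNReal.ofReal ((‖ζ - l1‖ ^ (2*q))⁻¹) :=
          lintegral_const_mul' _ _ ENNReal.ofReal_ne_top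
      _ ≤ ENNReal.ofReal ((3:ℝ)^q) * ENNReal.ofReal (Ct * (δ/2) ^ (2-2*q)) := by
          gcongr
          exact hCt l1 (δ/2) hδ2
      _ = ENNReal.ofReal ((3:ℝ)^q * (Ct * (2:ℝ)^(2*q-2)) * δ ^ (2-2*q)) := by
          rw [← ENNReal.ofReal_mul (by positivity), hhalf]
          ring_nf
  -- combine
  calc ∫⁻ ζ, f ζ = ∫⁻ ζ in Set.univ, f ζ := (setLIntegral_univ _).symm
    _ = ∫⁻ ζ in (S1 ∪ S2) ∪ (S1 ∪ S2)ᶜ, f ζ := by rw [Set.union_compl_self]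
    _ ≤ (∫⁻ ζ in S1 ∪ S2, f ζ) + ∫⁻ ζ in (S1 ∪ S2)ᶜ, f ζ := lintegral_union_le _ _ _
    _ ≤ ((∫⁻ ζ in S1, f ζ) + ∫⁻ ζ in S2, f ζ) + ∫⁻ ζ in (S1 ∪ S2)ᶜ, f ζ := by
        gcongr
        exact lintegral_union_le _ _ _
    _ ≤ ENNReal.ofReal (Cb * (2:ℝ)^(2*q-2) * δ ^ (2-2*q)) +
          ENNReal.ofReal (Cb * (2:ℝ)^(2*q-2) * δ ^ (2-2*q)) +
          ENNReal.ofReal ((3:ℝ)^q * (Ct * (2:ℝ)^(2*q-2)) * δ ^ (2-2*q)) := by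
        exact add_le_add (add_le_add hp1 hp2) hp3
    _ ≤ ENNReal.ofReal ((Cb * (2:ℝ)^(2*q-2) + Cb * (2:ℝ)^(2*q-2) +
          (3:ℝ)^q * (Ct * (2:ℝ)^(2*q-2))) * δ ^ (2-2*q)) := by
        rw [← ENNReal.ofReal_add (by positivity) (by positivity),
          ← ENNReal.ofReal_add (by positivity) (by positivity)]
        apply ENNReal.ofReal_le_ofReal
        apply le_of_eq; ring

set_option maxHeartbeats 2000000

/-- Vekua's estimate: for a bounded disk `D = B(c,R)` and `p > 2`, `ν = (p-2)/p`, there is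
`C > 0` such that for every `φ ∈ L^p(D)`, the Cauchy transform
`F(λ) = -(1/(2πi)) ∬_D φ(ζ)/(ζ-λ) dζ̄∧dζ` (with `dζ̄∧dζ = 2i dA`) satisfies
`sup |F| ≤ C ‖φ‖_{L^p(D)}` and `|F(λ1)-F(λ2)| ≤ C ‖φ‖_{L^p(D)} |λ1-λ2|^ν`. -/
theorem vekua_estimate (c : ℂ) (R : ℝ) (hR : 0 < R) (p : ℝ) (hp : 2 < p) :
    ∃ C : ℝ, 0 < C ∧ ∀ φ : ℂ → ℂ,
      MemLp φ (ENNReal.ofReal p) (volume.restrict (Metric.ball c R)) →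
      (∀ lam : ℂ,
        ‖(-(1 / (2 * (Real.pi : ℂ) * Complex.I))
            * (2 * Complex.I * ∫ ζ in Metric.ball c R, φ ζ / (ζ - lam)))‖
          ≤ C * (eLpNorm φ (ENNReal.ofReal p)
              (volume.restrict (Metric.ball c R))).toReal)
      ∧ (∀ lam1 lam2 : ℂ,
        ‖((-(1 / (2 * (Real.pi : ℂ) * Complex.I))
              * (2 * Complex.I * ∫ ζ in Metric.ball c R, φ ζ / (ζ - lam1)))
            - (-(1 / (2 * (Real.pi : ℂ) * Complex.I))
              * (2 * Complex.I * ∫ ζ in Metric.ball c R, φ ζ / (ζ - lam2))))‖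
          ≤ C * (eLpNorm φ (ENNReal.ofReal p)
              (volume.restrict (Metric.ball c R))).toReal
            * ‖lam1 - lam2‖ ^ ((p - 2) / p)) := by
  have hp1 : 1 < p := by linarith
  set q : ℝ := Real.conjExponent p with hqdef
  have hpq : p.HolderConjugate q := Real.HolderConjugate.conjExponent hp1
  have hq1 : 1 < q := hpq.symm.lt
  have hq0 : 0 < q := by linarith
  have hq2 : q < 2 := by
    rw [hqdef, Real.conjExponent, div_lt_iff₀ (by linarith)]
    linarith
  set P : ℝ≥0∞ := ENNReal.ofReal p with hPdef
  set μ : Measure ℂ := volume.restrict (ball c R) with hμdef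
  obtain ⟨M, hM0, hM⟩ := K_unif hq1 hq2 c hR
  obtain ⟨C2, hC20, hC2⟩ := kernel_bound hq1 hq2
  have hexp : 1 + (2 - 2*q)/q = (p - 2)/p := by
    have hq : q = p / (p-1) := rfl
    rw [hq]
    have h1 : p - 1 ≠ 0 := by linarith
    have h2 : p ≠ 0 := by linarith
    field_simp
    ring
  -- main lintegral bound for the Cauchy kernel
  have main1 : ∀ (φ : ℂ → ℂ), MemLp φ P μ → ∀ lam : ℂ,
      ∫⁻ ζ, ↑‖φ ζ / (ζ - lam)‖₊ ∂μ ≤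
        eLpNorm φ P μ * ENNReal.ofReal (M ^ (1/q)) := by
    intro φ hφ lam
    have hg : Measurable fun ζ : ℂ => ‖ζ - lam‖⁻¹ := by fun_prop
    have hg0 : ∀ ζ : ℂ, 0 ≤ ‖ζ - lam‖⁻¹ := fun ζ => by positivity
    have hpt : ∀ ζ : ℂ, (‖φ ζ / (ζ - lam)‖₊ : ℝ≥0∞) =
        ↑‖φ ζ‖₊ * ENNReal.ofReal (‖ζ - lam‖⁻¹) := by
      intro ζ
      rw [← ofReal_norm_eq_coe_nnnorm, ← ofReal_norm_eq_coe_nnnorm, norm_div,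
        div_eq_mul_inv, ENNReal.ofReal_mul (norm_nonneg _)]
    calc ∫⁻ ζ, ↑‖φ ζ / (ζ - lam)‖₊ ∂μ
        = ∫⁻ ζ, ↑‖φ ζ‖₊ * ENNReal.ofReal (‖ζ - lam‖⁻¹) ∂μ := by simp_rw [hpt]
      _ ≤ eLpNorm φ P μ * (∫⁻ ζ, ENNReal.ofReal (‖ζ - lam‖⁻¹ ^ q) ∂μ) ^ (1/q) :=
          holder_lint hpq hφ.1 hg hg0
      _ ≤ eLpNorm φ P μ * ENNReal.ofReal (M ^ (1/q)) := by
          have h1 : ∫⁻ ζ, ENNReal.ofReal (‖ζ - lam‖⁻¹ ^ q) ∂μ ≤ ENNReal.ofReal M := by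
            have hptq : ∀ ζ : ℂ, (‖ζ - lam‖⁻¹ ^ q) = (‖ζ - lam‖ ^ q)⁻¹ := fun ζ =>
              Real.inv_rpow (norm_nonneg _) q
            simp_rw [hptq]
            exact hM lam
          have h2 : (∫⁻ ζ, ENNReal.ofReal (‖ζ - lam‖⁻¹ ^ q) ∂μ) ^ (1/q) ≤
              ENNReal.ofReal (M ^ (1/q)) := by
            calc (∫⁻ ζ, ENNReal.ofReal (‖ζ - lam‖⁻¹ ^ q) ∂μ) ^ (1/q)
                ≤ (ENNReal.ofReal M) ^ (1/q) :=
                  ENNReal.rpow_le_rpow h1 (by positivity)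
              _ = ENNReal.ofReal (M ^ (1/q)) :=
                  ENNReal.ofReal_rpow_of_nonneg hM0.le (by positivity)
          exact mul_le_mul_right h2 _
  -- integrability
  have hint : ∀ (φ : ℂ → ℂ), MemLp φ P μ → ∀ lam : ℂ,
      Integrable (fun ζ => φ ζ / (ζ - lam)) μ := by
    intro φ hφ lam
    have hsm : AEStronglyMeasurable (fun ζ => φ ζ / (ζ - lam)) μ := by
      have h2 : Measurable fun ζ : ℂ => (ζ - lam)⁻¹ := by fun_prop
      have := hφ.1.mul h2.aestronglyMeasurable
      simp only [div_eq_mul_inv]; exact this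
    refine ⟨hsm, ?_⟩
    exact lt_of_le_of_lt (main1 φ hφ lam)
      (ENNReal.mul_lt_top hφ.2 ENNReal.ofReal_lt_top)
  -- norm bound, part 1
  have bound1 : ∀ (φ : ℂ → ℂ), MemLp φ P μ → ∀ lam : ℂ,
      ‖∫ ζ, φ ζ / (ζ - lam) ∂μ‖ ≤ M ^ (1/q) * (eLpNorm φ P μ).toReal := by
    intro φ hφ lam
    have h1 := norm_integral_le_lintegral_norm (μ := μ) (fun ζ => φ ζ / (ζ - lam))
    simp_rw [ofReal_norm_eq_coe_nnnorm] at h1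
    refine h1.trans ?_
    calc (∫⁻ ζ, ↑‖φ ζ / (ζ - lam)‖₊ ∂μ).toReal
        ≤ (eLpNorm φ P μ * ENNReal.ofReal (M ^ (1/q))).toReal :=
          ENNReal.toReal_mono (ENNReal.mul_ne_top hφ.2.ne ENNReal.ofReal_ne_top)
            (main1 φ hφ lam)
      _ = (eLpNorm φ P μ).toReal * (M ^ (1/q)) := by
          rw [ENNReal.toReal_mul, ENNReal.toReal_ofReal (by positivity)]
      _ = M ^ (1/q) * (eLpNorm φ P μ).toReal := by ring
  -- norm bound, part 2
  have bound2 : ∀ (φ : ℂ → ℂ), MemLp φ P μ → ∀ lam1 lam2 : ℂ, lam1 ≠ lam2 →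
      ‖(∫ ζ, φ ζ / (ζ - lam1) ∂μ) - ∫ ζ, φ ζ / (ζ - lam2) ∂μ‖ ≤
        C2 ^ (1/q) * (eLpNorm φ P μ).toReal * ‖lam1 - lam2‖ ^ ((p-2)/p) := by
    intro φ hφ lam1 lam2 hne
    set δ : ℝ := ‖lam1 - lam2‖ with hδdef
    have hδ : 0 < δ := by rw [hδdef, norm_pos_iff, sub_ne_zero]; exact hne
    -- a.e. identity
    have hz1 : μ {lam1} = 0 := by
      rw [hμdef, Measure.restrict_apply (measurableSet_singleton _)]
      exact measure_mono_null Set.inter_subset_left (measure_singleton _)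
    have hz2 : μ {lam2} = 0 := by
      rw [hμdef, Measure.restrict_apply (measurableSet_singleton _)]
      exact measure_mono_null Set.inter_subset_left (measure_singleton _)
    have hae1 : ∀ᵐ ζ ∂μ, ζ ≠ lam1 := by
      refine ae_iff.2 ?_
      convert hz1 using 2
      ext ζ; simp
    have hae2 : ∀ᵐ ζ ∂μ, ζ ≠ lam2 := by
      refine ae_iff.2 ?_
      convert hz2 using 2
      ext ζ; simp
    have hae : ∀ᵐ ζ ∂μ, φ ζ / (ζ - lam1) - φ ζ / (ζ - lam2) =
        φ ζ * ((lam1 - lam2) / ((ζ - lam1) * (ζ - lam2))) := by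
      filter_upwards [hae1, hae2] with ζ h1 h2
      have e1 : ζ - lam1 ≠ 0 := sub_ne_zero.2 h1
      have e2 : ζ - lam2 ≠ 0 := sub_ne_zero.2 h2
      field_simp
      ring
    have hdiff : (∫ ζ, φ ζ / (ζ - lam1) ∂μ) - ∫ ζ, φ ζ / (ζ - lam2) ∂μ =
        ∫ ζ, φ ζ * ((lam1 - lam2) / ((ζ - lam1) * (ζ - lam2))) ∂μ := by
      rw [← integral_sub (hint φ hφ lam1) (hint φ hφ lam2)]
      exact integral_congr_ae hae
    rw [hdiff]
    -- lintegral bound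
    have h1 := norm_integral_le_lintegral_norm (μ := μ)
      (fun ζ => φ ζ * ((lam1 - lam2) / ((ζ - lam1) * (ζ - lam2))))
    refine h1.trans ?_
    have hpt : ∀ ζ : ℂ,
        ENNReal.ofReal ‖φ ζ * ((lam1 - lam2) / ((ζ - lam1) * (ζ - lam2)))‖ =
        ENNReal.ofReal δ * (↑‖φ ζ‖₊ *
          ENNReal.ofReal ((‖ζ - lam1‖ * ‖ζ - lam2‖)⁻¹)) := by
      intro ζ
      rw [norm_mul, norm_div, norm_mul, ← ofReal_norm_eq_coe_nnnorm]
      rw [show ‖φ ζ‖ * (‖lam1 - lam2‖ / (‖ζ - lam1‖ * ‖ζ - lam2‖)) =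
        δ * (‖φ ζ‖ * (‖ζ - lam1‖ * ‖ζ - lam2‖)⁻¹) by rw [hδdef]; ring]
      rw [ENNReal.ofReal_mul hδ.le, ENNReal.ofReal_mul (norm_nonneg _)]
    simp_rw [hpt]
    have hg : Measurable fun ζ : ℂ => (‖ζ - lam1‖ * ‖ζ - lam2‖)⁻¹ := by fun_prop
    have hg0 : ∀ ζ : ℂ, 0 ≤ (‖ζ - lam1‖ * ‖ζ - lam2‖)⁻¹ := fun ζ => by positivity
    have hker : ∫⁻ ζ, ENNReal.ofReal ((‖ζ - lam1‖ * ‖ζ - lam2‖)⁻¹ ^ q) ∂μ ≤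
        ENNReal.ofReal (C2 * δ ^ (2 - 2*q)) := by
      have hptq : ∀ ζ : ℂ, ((‖ζ - lam1‖ * ‖ζ - lam2‖)⁻¹ ^ q) =
          (((‖ζ - lam1‖ * ‖ζ - lam2‖) ^ q)⁻¹) := fun ζ =>
        Real.inv_rpow (by positivity) q
      simp_rw [hptq]
      calc ∫⁻ ζ, ENNReal.ofReal (((‖ζ - lam1‖ * ‖ζ - lam2‖) ^ q)⁻¹) ∂μ
          ≤ ∫⁻ ζ, ENNReal.ofReal (((‖ζ - lam1‖ * ‖ζ - lam2‖) ^ q)⁻¹) :=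
            lintegral_mono' Measure.restrict_le_self le_rfl
        _ ≤ ENNReal.ofReal (C2 * δ ^ (2 - 2*q)) := hC2 lam1 lam2 hne
    have hhold := holder_lint hpq hφ.1 hg hg0
    have hstep : ∫⁻ ζ, ↑‖φ ζ‖₊ *
        ENNReal.ofReal ((‖ζ - lam1‖ * ‖ζ - lam2‖)⁻¹) ∂μ ≤
        eLpNorm φ P μ * ENNReal.ofReal (C2 ^ (1/q) * δ ^ ((2 - 2*q)/q)) := by
      refine hhold.trans ?_
      have h2 : (∫⁻ ζ, ENNReal.ofReal ((‖ζ - lam1‖ * ‖ζ - lam2‖)⁻¹ ^ q) ∂μ) ^ (1/q) ≤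
          ENNReal.ofReal (C2 ^ (1/q) * δ ^ ((2 - 2*q)/q)) := by
        calc (∫⁻ ζ, ENNReal.ofReal ((‖ζ - lam1‖ * ‖ζ - lam2‖)⁻¹ ^ q) ∂μ) ^ (1/q)
            ≤ (ENNReal.ofReal (C2 * δ ^ (2 - 2*q))) ^ (1/q) :=
              ENNReal.rpow_le_rpow hker (by positivity)
          _ = ENNReal.ofReal ((C2 * δ ^ (2 - 2*q)) ^ (1/q)) :=
              ENNReal.ofReal_rpow_of_nonneg (by positivity) (by positivity)
          _ = ENNReal.ofReal (C2 ^ (1/q) * δ ^ ((2 - 2*q)/q)) := by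
              congr 1
              rw [Real.mul_rpow hC20.le (Real.rpow_nonneg hδ.le _),
                ← Real.rpow_mul hδ.le, mul_one_div]
      exact mul_le_mul_right h2 _
    calc (∫⁻ ζ, ENNReal.ofReal δ * (↑‖φ ζ‖₊ *
          ENNReal.ofReal ((‖ζ - lam1‖ * ‖ζ - lam2‖)⁻¹)) ∂μ).toReal
        = (ENNReal.ofReal δ * ∫⁻ ζ, ↑‖φ ζ‖₊ *
            ENNReal.ofReal ((‖ζ - lam1‖ * ‖ζ - lam2‖)⁻¹) ∂μ).toReal := by
          rw [lintegral_const_mul' _ _ ENNReal.ofReal_ne_top]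
      _ ≤ (ENNReal.ofReal δ * (eLpNorm φ P μ *
            ENNReal.ofReal (C2 ^ (1/q) * δ ^ ((2 - 2*q)/q)))).toReal :=
          ENNReal.toReal_mono
            (ENNReal.mul_ne_top ENNReal.ofReal_ne_top
              (ENNReal.mul_ne_top hφ.2.ne ENNReal.ofReal_ne_top))
            (mul_le_mul_right hstep _)
      _ = δ * ((eLpNorm φ P μ).toReal * (C2 ^ (1/q) * δ ^ ((2 - 2*q)/q))) := by
          rw [ENNReal.toReal_mul, ENNReal.toReal_mul, ENNReal.toReal_ofReal hδ.le,
            ENNReal.toReal_ofReal (by positivity)]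
      _ = C2 ^ (1/q) * (eLpNorm φ P μ).toReal * (δ * δ ^ ((2 - 2*q)/q)) := by ring
      _ = C2 ^ (1/q) * (eLpNorm φ P μ).toReal * δ ^ ((p-2)/p) := by
          rw [show δ * δ ^ ((2 - 2*q)/q) = δ ^ (1:ℝ) * δ ^ ((2 - 2*q)/q) by
              rw [Real.rpow_one],
            ← Real.rpow_add hδ, hexp]
  -- prefactor algebra
  have key : ∀ z : ℂ, -(1 / (2 * (Real.pi : ℂ) * Complex.I)) * (2 * Complex.I * z)
      = -((Real.pi : ℂ))⁻¹ * z := by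
    intro z
    have hπ : (Real.pi : ℂ) ≠ 0 := Complex.ofReal_ne_zero.2 Real.pi_ne_zero
    have hI : Complex.I ≠ 0 := Complex.I_ne_zero
    field_simp
  have habs : ∀ z : ℂ, ‖(-((Real.pi : ℂ))⁻¹ * z)‖
      = Real.pi⁻¹ * ‖z‖ := by
    intro z
    rw [norm_mul, norm_neg, norm_inv, Complex.norm_real, Real.norm_of_nonneg Real.pi_pos.le]
  have hMq : (0:ℝ) < M ^ (1/q) := Real.rpow_pos_of_pos hM0 _
  have hC2q : (0:ℝ) < C2 ^ (1/q) := Real.rpow_pos_of_pos hC20 _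
  have hπ0 : (0:ℝ) < Real.pi⁻¹ := by positivity
  refine ⟨Real.pi⁻¹ * M ^ (1/q) + Real.pi⁻¹ * C2 ^ (1/q) + 1, by positivity, ?_⟩
  intro φ hφ
  have hNp : 0 ≤ (eLpNorm φ P μ).toReal := ENNReal.toReal_nonneg
  constructor
  · intro lam
    rw [key]
    calc ‖(-((Real.pi : ℂ))⁻¹ * ∫ ζ in ball c R, φ ζ / (ζ - lam))‖
        = Real.pi⁻¹ * ‖∫ ζ, φ ζ / (ζ - lam) ∂μ‖ := habs _
      _ ≤ Real.pi⁻¹ * (M ^ (1/q) * (eLpNorm φ P μ).toReal) := by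
          have := bound1 φ hφ lam
          nlinarith [this, hπ0]
      _ ≤ (Real.pi⁻¹ * M ^ (1/q) + Real.pi⁻¹ * C2 ^ (1/q) + 1) *
            (eLpNorm φ P μ).toReal := by
          have h9 : 0 ≤ (Real.pi⁻¹ * C2 ^ (1/q) + 1) * (eLpNorm φ P μ).toReal := by
            positivity
          nlinarith [h9]
  · intro lam1 lam2
    rcases eq_or_ne lam1 lam2 with heq | hne
    · subst heq
      simp only [sub_self]
      rw [norm_zero]
      positivity
    · rw [key, key, show -((Real.pi : ℂ))⁻¹ * (∫ ζ in ball c R, φ ζ / (ζ - lam1)) -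
          -((Real.pi : ℂ))⁻¹ * (∫ ζ in ball c R, φ ζ / (ζ - lam2)) =
          -((Real.pi : ℂ))⁻¹ * ((∫ ζ, φ ζ / (ζ - lam1) ∂μ) -
            ∫ ζ, φ ζ / (ζ - lam2) ∂μ) by ring]
      calc ‖(-((Real.pi : ℂ))⁻¹ * ((∫ ζ, φ ζ / (ζ - lam1) ∂μ) -
              ∫ ζ, φ ζ / (ζ - lam2) ∂μ))‖
          = Real.pi⁻¹ * ‖(∫ ζ, φ ζ / (ζ - lam1) ∂μ) -
              ∫ ζ, φ ζ / (ζ - lam2) ∂μ‖ := habs _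
        _ ≤ Real.pi⁻¹ * (C2 ^ (1/q) * (eLpNorm φ P μ).toReal *
              ‖lam1 - lam2‖ ^ ((p-2)/p)) := by
            have := bound2 φ hφ lam1 lam2 hne
            nlinarith
        _ ≤ (Real.pi⁻¹ * M ^ (1/q) + Real.pi⁻¹ * C2 ^ (1/q) + 1) *
              (eLpNorm φ P μ).toReal * ‖lam1 - lam2‖ ^ ((p-2)/p) := by
            have hd : (0:ℝ) ≤ ‖lam1 - lam2‖ ^ ((p-2)/p) :=
              Real.rpow_nonneg (norm_nonneg _) _
            have h9 : 0 ≤ (Real.pi⁻¹ * M ^ (1/q) + 1) *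
                ((eLpNorm φ P μ).toReal * ‖lam1 - lam2‖ ^ ((p-2)/p)) := by positivity
            nlinarith [h9]
end
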